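/- For the metric ds² = a(y)dx² + 2b(y)dxdy + c(y)dy² with a(y) ≠ 0 and ac − b² ≠ 0 on a domain, and a constant h ≠ 0, regard F(x,y,p) = (b² − h²c)p² + 2b(a − h²)p + a(a − h²) as an implicit differential equation. Then a point (x,y,p) with F = 0 satisfies F_p = 0 if and only if a(y) = h² and p = 0; at such points F_pp = −2(ac − b²) ≠ 0 and F_y = a(y)a'(y), so F_y ≠ 0 iff a'(y) ≠ 0. -/

import Mathlib

/-- For `F(y,p) = (b² − h²c)p² + 2b(a − h²)p + a(a − h²)` with `a(y) ≠ 0`,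
`ac − b² ≠ 0` and `h ≠ 0`: a point with `F = 0` satisfies `F_p = 0` iff
`a(y) = h²` and `p = 0`; at such points `F_pp = −2(ac − b²) ≠ 0` and
`F_y = a·a'`, so `F_y ≠ 0` iff `a' ≠ 0`. -/
theorem stmt_5
    (a b c : ℝ → ℝ)
    (ha : ContDiff ℝ (⊤ : ℕ∞) a) (hb : ContDiff ℝ (⊤ : ℕ∞) b) (hc : ContDiff ℝ (⊤ : ℕ∞) c)
    (hane : ∀ v, a v ≠ 0) (hnd : ∀ v, a v * c v - b v ^ 2 ≠ 0)
    (h : ℝ) (hh : h ≠ 0)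
    (F Fp : ℝ → ℝ → ℝ)
    (hF : ∀ y p, F y p = (b y ^ 2 - h ^ 2 * c y) * p ^ 2
        + 2 * b y * (a y - h ^ 2) * p + a y * (a y - h ^ 2))
    (hFp : ∀ y p, HasDerivAt (fun q => F y q) (Fp y p) p) :
    (∀ y p : ℝ, (F y p = 0 ∧ Fp y p = 0) ↔ (a y = h ^ 2 ∧ p = 0)) ∧
    (∀ y : ℝ, a y = h ^ 2 →
      (deriv (fun q => Fp y q) 0 = -(2 * (a y * c y - b y ^ 2)) ∧
        deriv (fun q => Fp y q) 0 ≠ 0 ∧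
        deriv (fun s => F s 0) y = a y * deriv a y ∧
        (deriv (fun s => F s 0) y ≠ 0 ↔ deriv a y ≠ 0))) := by
  -- explicit formula for Fp
  have hFp' : ∀ y p, Fp y p = 2 * (b y ^ 2 - h ^ 2 * c y) * p
      + 2 * b y * (a y - h ^ 2) := by
    intro y p
    have h1 : HasDerivAt (fun q : ℝ => (b y ^ 2 - h ^ 2 * c y) * q ^ 2
        + 2 * b y * (a y - h ^ 2) * q + a y * (a y - h ^ 2))
        (2 * (b y ^ 2 - h ^ 2 * c y) * p + 2 * b y * (a y - h ^ 2)) p := by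
      have hq : HasDerivAt (fun q : ℝ => q ^ 2) (2 * p) p := by
        simpa using (hasDerivAt_pow 2 p)
      have := (((hq.const_mul (b y ^ 2 - h ^ 2 * c y)).add
          ((hasDerivAt_id p).const_mul (2 * b y * (a y - h ^ 2)))).add_const
          (a y * (a y - h ^ 2)))
      exact this.congr_deriv (by ring)
    have h2 : HasDerivAt (fun q => F y q)
        (2 * (b y ^ 2 - h ^ 2 * c y) * p + 2 * b y * (a y - h ^ 2)) p := by
      refine h1.congr_of_eventuallyEq ?_
      filter_upwards with q
      rw [hF]
    exact (hFp y p).unique h2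
  constructor
  · intro y p
    constructor
    · rintro ⟨h1, h2⟩
      rw [hF] at h1
      rw [hFp'] at h2
      have hA : a y = h ^ 2 := by
        by_contra hA
        have hA' : a y - h ^ 2 ≠ 0 := sub_ne_zero.mpr hA
        have key : (a y - h ^ 2) * (b y * p + a y) = 0 := by
          linear_combination h1 - p / 2 * h2
        have hBpA : b y * p + a y = 0 := by
          rcases mul_eq_zero.mp key with hk | hk
          · exact absurd hk hA'
          · exact hk
        have hcon : h ^ 2 * (a y * c y - b y ^ 2) = 0 := by
          linear_combination (b y / 2) * h2 - (b y ^ 2 - h ^ 2 * c y) * hBpA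
        exact (mul_ne_zero (pow_ne_zero 2 hh) (hnd y)) hcon
      refine ⟨hA, ?_⟩
      have hco : b y ^ 2 - h ^ 2 * c y ≠ 0 := by
        intro hz
        apply hnd y
        linear_combination c y * hA - hz
      have h3 : 2 * (b y ^ 2 - h ^ 2 * c y) * p = 0 := by
        linear_combination h2 - 2 * b y * hA
      have := mul_eq_zero.mp h3
      rcases this with hk | hk
      · exact absurd hk (mul_ne_zero two_ne_zero hco)
      · exact hk
    · rintro ⟨hA, hp⟩
      subst hp
      constructor
      · rw [hF]; linear_combination a y * hA
      · rw [hFp']; linear_combination 2 * b y * hA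
  · intro y hA
    have hfun : (fun q => Fp y q) = fun q : ℝ =>
        2 * (b y ^ 2 - h ^ 2 * c y) * q + 2 * b y * (a y - h ^ 2) :=
      funext fun q => hFp' y q
    have hd1 : HasDerivAt (fun q : ℝ =>
        2 * (b y ^ 2 - h ^ 2 * c y) * q + 2 * b y * (a y - h ^ 2))
        (2 * (b y ^ 2 - h ^ 2 * c y)) 0 := by
      simpa using ((hasDerivAt_id (0:ℝ)).const_mul
        (2 * (b y ^ 2 - h ^ 2 * c y))).add_const (2 * b y * (a y - h ^ 2))
    have e1 : deriv (fun q => Fp y q) 0 = -(2 * (a y * c y - b y ^ 2)) := by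
      rw [hfun, hd1.deriv]
      linear_combination 2 * c y * hA
    have da : DifferentiableAt ℝ a y := (ha.differentiable (by simp)) y
    have hfun2 : (fun s => F s 0) = fun s => a s * (a s - h ^ 2) :=
      funext fun s => by rw [hF]; ring
    have hd2 : HasDerivAt (fun s => a s * (a s - h ^ 2))
        (deriv a y * (a y - h ^ 2) + a y * deriv a y) y := by
      exact da.hasDerivAt.mul (da.hasDerivAt.sub_const (h ^ 2))
    have e2 : deriv (fun s => F s 0) y = a y * deriv a y := by
      rw [hfun2, hd2.deriv]
      linear_combination deriv a y * hA
    refine ⟨e1, ?_, e2, ?_⟩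
    · rw [e1]
      exact neg_ne_zero.mpr (mul_ne_zero two_ne_zero (hnd y))
    · rw [e2, mul_ne_zero_iff]
      exact ⟨fun hk => hk.2, fun hk => ⟨hane y, hk⟩⟩
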